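/- arXiv:1708.05363 — 5 statements merged into one kernel-verified Lean document; each statement's English description precedes it below -/
import Mathlib

section
/- Let I and J be finite index sets (the channels inflowing into and outflowing from a junction node). For each channel end m ∈ I ∪ J suppose given Δx_m > 0, Ā_m ≥ 0, interface data A⁻_m, A⁺_m ≥ 0, u⁻_m, u⁺_m, c⁻_m, c⁺_m ≥ 0, one-sided local speeds a⁺_m = max{0, u⁺_m + c⁺_m, u⁻_m + c⁻_m}, a⁻_m = min{0, u⁺_m − c⁺_m, u⁻_m − c⁻_m} with a⁺_m − a⁻_m > 0, and central-upwind mass flux H_m = (a⁺_m u⁻_m A⁻_m − a⁻_m u⁺_m A⁺_m)/(a⁺_m − a⁻_m) + a⁺_m a⁻_m (A⁺_m − A⁻_m)/(a⁺_m − a⁻_m). If Δt ≥ 0 satisfies Δx_i Ā_i + Δt·a⁻_i A⁺_i ≥ 0 for every i ∈ I and Δx_j Ā_j − Δt·a⁺_j A⁻_j ≥ 0 for every j ∈ J, then ∑_{i∈I} Δx_i Ā_i + ∑_{j∈J} Δx_j Ā_j + Δt·∑_{i∈I} H_i − Δt·∑_{j∈J} H_j ≥ 0. -/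
/-!
At each channel end the central-upwind mass flux lies between `a⁻ A⁺` and `a⁺ A⁻`: multiplied by
`a⁺ - a⁻ > 0`, both gaps factor as `a⁺ A⁻ (·) - a⁻ A⁺ (·)` with nonnegative brackets, because the
local speeds satisfy `a⁻ ≤ 0 ≤ a⁺` and `a⁻ ≤ u^± ≤ a⁺`. Hence the conditions at the inflowing
ends give `Δx_i Ā_i + Δt H_i ≥ 0`, those at the outflowing ends give `Δx_j Ā_j - Δt H_j ≥ 0`,
and the claim is the sum of these.
-/

open Finset

noncomputable def centralUpwindFlux (ap am um up Am Ap : ℝ) : ℝ :=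
  (ap * um * Am - am * up * Ap) / (ap - am) + ap * am * (Ap - Am) / (ap - am)

section CentralUpwindFlux

variable {ap am um up Am Ap : ℝ}

lemma centralUpwindFlux_sub_mul_mul_sub (h : am < ap) :
    (centralUpwindFlux ap am um up Am Ap - am * Ap) * (ap - am)
      = ap * Am * (um - am) - am * Ap * (up - am) := by
  have : ap - am ≠ 0 := (sub_pos.2 h).ne'
  unfold centralUpwindFlux
  field_simp
  ring

lemma mul_sub_centralUpwindFlux_mul_sub (h : am < ap) :
    (ap * Am - centralUpwindFlux ap am um up Am Ap) * (ap - am)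
      = ap * Am * (ap - um) - am * Ap * (ap - up) := by
  have : ap - am ≠ 0 := (sub_pos.2 h).ne'
  unfold centralUpwindFlux
  field_simp
  ring

lemma mul_le_centralUpwindFlux (hap : 0 ≤ ap) (ham : am ≤ 0) (h : am < ap)
    (hum : am ≤ um) (hup : am ≤ up) (hAm : 0 ≤ Am) (hAp : 0 ≤ Ap) :
    am * Ap ≤ centralUpwindFlux ap am um up Am Ap := by
  have hgap : 0 ≤ (centralUpwindFlux ap am um up Am Ap - am * Ap) * (ap - am) := by
    rw [centralUpwindFlux_sub_mul_mul_sub h]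
    linarith [mul_nonneg (mul_nonneg hap hAm) (sub_nonneg.2 hum),
      mul_nonneg (mul_nonneg (neg_nonneg.2 ham) hAp) (sub_nonneg.2 hup)]
  exact sub_nonneg.1 (nonneg_of_mul_nonneg_left hgap (sub_pos.2 h))

lemma centralUpwindFlux_le_mul (hap : 0 ≤ ap) (ham : am ≤ 0) (h : am < ap)
    (hum : um ≤ ap) (hup : up ≤ ap) (hAm : 0 ≤ Am) (hAp : 0 ≤ Ap) :
    centralUpwindFlux ap am um up Am Ap ≤ ap * Am := by
  have hgap : 0 ≤ (ap * Am - centralUpwindFlux ap am um up Am Ap) * (ap - am) := by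
    rw [mul_sub_centralUpwindFlux_mul_sub h]
    linarith [mul_nonneg (mul_nonneg hap hAm) (sub_nonneg.2 hum),
      mul_nonneg (mul_nonneg (neg_nonneg.2 ham) hAp) (sub_nonneg.2 hup)]
  exact sub_nonneg.1 (nonneg_of_mul_nonneg_left hgap (sub_pos.2 h))

lemma centralUpwindFlux_mem_Icc_of_localSpeeds {cm cp : ℝ} (hcm : 0 ≤ cm) (hcp : 0 ≤ cp)
    (hAm : 0 ≤ Am) (hAp : 0 ≤ Ap)
    (hap : ap = max 0 (max (up + cp) (um + cm)))
    (ham : am = min 0 (min (up - cp) (um - cm))) (h : am < ap) :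
    centralUpwindFlux ap am um up Am Ap ∈ Set.Icc (am * Ap) (ap * Am) := by
  have hap₀ : 0 ≤ ap := hap ▸ le_max_left _ _
  have ham₀ : am ≤ 0 := ham ▸ min_le_left _ _
  have hup_le : up + cp ≤ ap := hap ▸ (le_max_left _ _).trans (le_max_right _ _)
  have hum_le : um + cm ≤ ap := hap ▸ (le_max_right _ _).trans (le_max_right _ _)
  have hup_ge : am ≤ up - cp := ham ▸ (min_le_right _ _).trans (min_le_left _ _)
  have hum_ge : am ≤ um - cm := ham ▸ (min_le_right _ _).trans (min_le_right _ _)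
  exact ⟨mul_le_centralUpwindFlux hap₀ ham₀ h (by linarith) (by linarith) hAm hAp,
    centralUpwindFlux_le_mul hap₀ ham₀ h (by linarith) (by linarith) hAm hAp⟩

end CentralUpwindFlux

theorem stmt2_general {ι : Type*} [DecidableEq ι] (I J : Finset ι)
    (Δx Abar Am Ap um up cm cp ap am H : ι → ℝ)
    (hAm : ∀ m ∈ I ∪ J, 0 ≤ Am m) (hAp : ∀ m ∈ I ∪ J, 0 ≤ Ap m)
    (hcm : ∀ m ∈ I ∪ J, 0 ≤ cm m) (hcp : ∀ m ∈ I ∪ J, 0 ≤ cp m)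
    (hap : ∀ m ∈ I ∪ J, ap m = max 0 (max (up m + cp m) (um m + cm m)))
    (ham : ∀ m ∈ I ∪ J, am m = min 0 (min (up m - cp m) (um m - cm m)))
    (hpos : ∀ m ∈ I ∪ J, 0 < ap m - am m)
    (hH : ∀ m ∈ I ∪ J, H m = (ap m * um m * Am m - am m * up m * Ap m) / (ap m - am m)
        + ap m * am m * (Ap m - Am m) / (ap m - am m))
    (Δt : ℝ) (hΔt : 0 ≤ Δt)
    (hin : ∀ i ∈ I, 0 ≤ Δx i * Abar i + Δt * am i * Ap i)
    (hout : ∀ j ∈ J, 0 ≤ Δx j * Abar j - Δt * ap j * Am j) :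
    0 ≤ (∑ i ∈ I, Δx i * Abar i) + (∑ j ∈ J, Δx j * Abar j)
        + Δt * (∑ i ∈ I, H i) - Δt * (∑ j ∈ J, H j) := by
  have hbounds : ∀ m ∈ I ∪ J, H m ∈ Set.Icc (am m * Ap m) (ap m * Am m) := fun m hm =>
    hH m hm ▸ centralUpwindFlux_mem_Icc_of_localSpeeds (hcm m hm) (hcp m hm) (hAm m hm)
      (hAp m hm) (hap m hm) (ham m hm) (sub_pos.1 (hpos m hm))
  have hinflow : ∀ i ∈ I, 0 ≤ Δx i * Abar i + Δt * H i := fun i hi => by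
    linarith [hin i hi, mul_le_mul_of_nonneg_left (hbounds i (mem_union_left _ hi)).1 hΔt]
  have houtflow : ∀ j ∈ J, 0 ≤ Δx j * Abar j - Δt * H j := fun j hj => by
    linarith [hout j hj, mul_le_mul_of_nonneg_left (hbounds j (mem_union_right _ hj)).2 hΔt]
  calc (0 : ℝ) ≤ (∑ i ∈ I, (Δx i * Abar i + Δt * H i)) + ∑ j ∈ J, (Δx j * Abar j - Δt * H j) :=
        add_nonneg (sum_nonneg hinflow) (sum_nonneg houtflow)
    _ = (∑ i ∈ I, Δx i * Abar i) + (∑ j ∈ J, Δx j * Abar j)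
        + Δt * (∑ i ∈ I, H i) - Δt * (∑ j ∈ J, H j) := by
      rw [sum_add_distrib, sum_sub_distrib, mul_sum, mul_sum]
      ring

/-- Junction-node part of the positivity-preserving theorem: if
`Δx_i Ā_i + Δt a⁻_i A⁺_i ≥ 0` for each inflowing channel end `i ∈ I` and
`Δx_j Ā_j - Δt a⁺_j A⁻_j ≥ 0` for each outflowing channel end `j ∈ J`, then the updated
total water volume around the node,
`∑_{i∈I} Δx_i Ā_i + ∑_{j∈J} Δx_j Ā_j + Δt ∑_{i∈I} H_i - Δt ∑_{j∈J} H_j`, is nonnegative. -/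
theorem stmt2 {ι : Type*} [DecidableEq ι] (I J : Finset ι)
    (Δx Abar Am Ap um up cm cp ap am H : ι → ℝ)
    (hΔx : ∀ m ∈ I ∪ J, 0 < Δx m) (hAbar : ∀ m ∈ I ∪ J, 0 ≤ Abar m)
    (hAm : ∀ m ∈ I ∪ J, 0 ≤ Am m) (hAp : ∀ m ∈ I ∪ J, 0 ≤ Ap m)
    (hcm : ∀ m ∈ I ∪ J, 0 ≤ cm m) (hcp : ∀ m ∈ I ∪ J, 0 ≤ cp m)
    (hap : ∀ m ∈ I ∪ J, ap m = max 0 (max (up m + cp m) (um m + cm m)))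
    (ham : ∀ m ∈ I ∪ J, am m = min 0 (min (up m - cp m) (um m - cm m)))
    (hpos : ∀ m ∈ I ∪ J, 0 < ap m - am m)
    (hH : ∀ m ∈ I ∪ J, H m = (ap m * um m * Am m - am m * up m * Ap m) / (ap m - am m)
        + ap m * am m * (Ap m - Am m) / (ap m - am m))
    (Δt : ℝ) (hΔt : 0 ≤ Δt)
    (hin : ∀ i ∈ I, 0 ≤ Δx i * Abar i + Δt * am i * Ap i)
    (hout : ∀ j ∈ J, 0 ≤ Δx j * Abar j - Δt * ap j * Am j) :
    0 ≤ (∑ i ∈ I, Δx i * Abar i) + (∑ j ∈ J, Δx j * Abar j)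
        + Δt * (∑ i ∈ I, H i) - Δt * (∑ j ∈ J, H j) :=
  stmt2_general I J Δx Abar Am Ap um up cm cp ap am H hAm hAp hcm hcp hap ham hpos hH Δt hΔt hin
    hout
end

section
/- Let I and J be finite index sets. For each channel end m ∈ I ∪ J suppose given Δx_m > 0, Ā_m ≥ 0, interface data A⁻_m, A⁺_m ≥ 0, u⁻_m, u⁺_m, c⁻_m, c⁺_m ≥ 0, one-sided local speeds a⁺_m = max{0, u⁺_m + c⁺_m, u⁻_m + c⁻_m}, a⁻_m = min{0, u⁺_m − c⁺_m, u⁻_m − c⁻_m} with a⁺_m − a⁻_m > 0, central-upwind mass flux H_m = (a⁺_m u⁻_m A⁻_m − a⁻_m u⁺_m A⁺_m)/(a⁺_m − a⁻_m) + a⁺_m a⁻_m (A⁺_m − A⁻_m)/(a⁺_m − a⁻_m), and an interface time step Δt_m ≥ 0. Assume the draining-time restrictions: Δt_i·(−a⁻_i)·A⁺_i·(a⁺_i − u⁺_i) ≤ Δx_i·Ā_i·(a⁺_i − a⁻_i) for every i ∈ I, and Δt_j·a⁺_j·A⁻_j·(u⁻_j − a⁻_j) ≤ Δx_j·Ā_j·(a⁺_j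 − a⁻_j) for every j ∈ J. Then ∑_{i∈I} Δx_i Ā_i + ∑_{j∈J} Δx_j Ā_j + ∑_{i∈I} Δt_i H_i − ∑_{j∈J} Δt_j H_j ≥ 0. -/
/-!
Multiplied by `a⁺ - a⁻ > 0`, the central-upwind flux splits as
`a⁺ A⁻ (u⁻ - a⁻) - (-a⁻) A⁺ (a⁺ - u⁺)`, a difference of two nonnegative terms. At an inflowing
end the draining bound says the volume pays for the subtracted term, at an outflowing end that it
pays for the added one; so every inflowing end keeps a nonnegative volume and every outflowing
end loses at most its volume, and the node total stays nonnegative.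
-/

open Finset

namespace Junction

noncomputable def centralUpwindFlux (ap am um up Am Ap : ℝ) : ℝ :=
  (ap * um * Am - am * up * Ap) / (ap - am) + ap * am * (Ap - Am) / (ap - am)

section LocalSpeeds

variable {up um cp cm : ℝ}

lemma zero_le_localSpeedPos : 0 ≤ max 0 (max (up + cp) (um + cm)) :=
  le_max_left _ _

lemma le_localSpeedPos (hcp : 0 ≤ cp) : up ≤ max 0 (max (up + cp) (um + cm)) :=
  le_max_of_le_right (le_max_of_le_left (by linarith))

lemma localSpeedNeg_nonpos : min 0 (min (up - cp) (um - cm)) ≤ 0 :=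
  min_le_left _ _

lemma localSpeedNeg_le (hcm : 0 ≤ cm) : min 0 (min (up - cp) (um - cm)) ≤ um :=
  min_le_of_right_le (min_le_of_right_le (by linarith))

end LocalSpeeds

section Draining

variable {ap am um up Am Ap V Δt : ℝ}

lemma centralUpwindFlux_mul_sub (h : ap - am ≠ 0) :
    centralUpwindFlux ap am um up Am Ap * (ap - am)
      = ap * Am * (um - am) - (-am) * Ap * (ap - up) := by
  unfold centralUpwindFlux
  field_simp
  ring

lemma volume_add_inflow_nonneg (hpos : 0 < ap - am) (hap : 0 ≤ ap) (ham : am ≤ um)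
    (hAm : 0 ≤ Am) (hΔt : 0 ≤ Δt) (hdrain : Δt * (-am) * Ap * (ap - up) ≤ V * (ap - am)) :
    0 ≤ V + Δt * centralUpwindFlux ap am um up Am Ap := by
  have hgain : 0 ≤ Δt * ap * Am * (um - am) := by
    have := sub_nonneg.2 ham
    positivity
  have hflux := centralUpwindFlux_mul_sub (um := um) (up := up) (Am := Am) (Ap := Ap) hpos.ne'
  refine nonneg_of_mul_nonneg_right ?_ hpos
  calc 0 ≤ V * (ap - am) - Δt * (-am) * Ap * (ap - up) + Δt * ap * Am * (um - am) := by
        linarith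
    _ = (ap - am) * (V + Δt * centralUpwindFlux ap am um up Am Ap) := by
        linear_combination (-Δt) * hflux

lemma outflow_le_volume (hpos : 0 < ap - am) (ham : am ≤ 0) (hup : up ≤ ap)
    (hAp : 0 ≤ Ap) (hΔt : 0 ≤ Δt) (hdrain : Δt * ap * Am * (um - am) ≤ V * (ap - am)) :
    Δt * centralUpwindFlux ap am um up Am Ap ≤ V := by
  have hloss : 0 ≤ Δt * (-am) * Ap * (ap - up) := by
    have := neg_nonneg.2 ham
    have := sub_nonneg.2 hup
    positivity
  have hflux := centralUpwindFlux_mul_sub (um := um) (up := up) (Am := Am) (Ap := Ap) hpos.ne'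
  refine sub_nonneg.1 (nonneg_of_mul_nonneg_right ?_ hpos)
  calc 0 ≤ V * (ap - am) - Δt * ap * Am * (um - am) + Δt * (-am) * Ap * (ap - up) := by
        linarith
    _ = (ap - am) * (V - Δt * centralUpwindFlux ap am um up Am Ap) := by
        linear_combination Δt * hflux

end Draining

end Junction

open Junction in
theorem stmt4_general {ι : Type*} [DecidableEq ι] (I J : Finset ι)
    (Δx Abar Am Ap um up cm cp ap am H Δt : ι → ℝ)
    (hAm : ∀ m ∈ I ∪ J, 0 ≤ Am m) (hAp : ∀ m ∈ I ∪ J, 0 ≤ Ap m)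
    (hcm : ∀ m ∈ I ∪ J, 0 ≤ cm m) (hcp : ∀ m ∈ I ∪ J, 0 ≤ cp m)
    (hap : ∀ m ∈ I ∪ J, ap m = max 0 (max (up m + cp m) (um m + cm m)))
    (ham : ∀ m ∈ I ∪ J, am m = min 0 (min (up m - cp m) (um m - cm m)))
    (hpos : ∀ m ∈ I ∪ J, 0 < ap m - am m)
    (hH : ∀ m ∈ I ∪ J, H m = (ap m * um m * Am m - am m * up m * Ap m) / (ap m - am m)
        + ap m * am m * (Ap m - Am m) / (ap m - am m))
    (hΔt : ∀ m ∈ I ∪ J, 0 ≤ Δt m)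
    (hin : ∀ i ∈ I,
      Δt i * (-am i) * Ap i * (ap i - up i) ≤ Δx i * Abar i * (ap i - am i))
    (hout : ∀ j ∈ J,
      Δt j * ap j * Am j * (um j - am j) ≤ Δx j * Abar j * (ap j - am j)) :
    0 ≤ (∑ i ∈ I, Δx i * Abar i) + (∑ j ∈ J, Δx j * Abar j)
        + (∑ i ∈ I, Δt i * H i) - ∑ j ∈ J, Δt j * H j := by
  have hinflow : ∀ i ∈ I, 0 ≤ Δx i * Abar i + Δt i * H i := fun i hi => by
    have hm := mem_union_left J hi
    rw [hH i hm]
    refine volume_add_inflow_nonneg (hpos i hm) ?_ ?_ (hAm i hm) (hΔt i hm) (hin i hi)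
    · exact hap i hm ▸ zero_le_localSpeedPos
    · exact ham i hm ▸ localSpeedNeg_le (hcm i hm)
  have houtflow : ∀ j ∈ J, Δt j * H j ≤ Δx j * Abar j := fun j hj => by
    have hm := mem_union_right I hj
    rw [hH j hm]
    refine outflow_le_volume (hpos j hm) ?_ ?_ (hAp j hm) (hΔt j hm) (hout j hj)
    · exact ham j hm ▸ localSpeedNeg_nonpos
    · exact hap j hm ▸ le_localSpeedPos (hcp j hm)
  have hI := sum_nonneg hinflow
  have hJ := sum_le_sum houtflow
  rw [sum_add_distrib] at hI
  linarith

/-- Junction-node positivity under the draining-time restrictions: with per-interface time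
steps `Δt_m ≥ 0` satisfying `Δt_i (-a⁻_i) A⁺_i (a⁺_i - u⁺_i) ≤ Δx_i Ā_i (a⁺_i - a⁻_i)` for
inflowing ends and `Δt_j a⁺_j A⁻_j (u⁻_j - a⁻_j) ≤ Δx_j Ā_j (a⁺_j - a⁻_j)` for outflowing
ends, the updated total water volume around the node is nonnegative. -/
theorem stmt4 {ι : Type*} [DecidableEq ι] (I J : Finset ι)
    (Δx Abar Am Ap um up cm cp ap am H Δt : ι → ℝ)
    (hΔx : ∀ m ∈ I ∪ J, 0 < Δx m) (hAbar : ∀ m ∈ I ∪ J, 0 ≤ Abar m)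
    (hAm : ∀ m ∈ I ∪ J, 0 ≤ Am m) (hAp : ∀ m ∈ I ∪ J, 0 ≤ Ap m)
    (hcm : ∀ m ∈ I ∪ J, 0 ≤ cm m) (hcp : ∀ m ∈ I ∪ J, 0 ≤ cp m)
    (hap : ∀ m ∈ I ∪ J, ap m = max 0 (max (up m + cp m) (um m + cm m)))
    (ham : ∀ m ∈ I ∪ J, am m = min 0 (min (up m - cp m) (um m - cm m)))
    (hpos : ∀ m ∈ I ∪ J, 0 < ap m - am m)
    (hH : ∀ m ∈ I ∪ J, H m = (ap m * um m * Am m - am m * up m * Ap m) / (ap m - am m)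
        + ap m * am m * (Ap m - Am m) / (ap m - am m))
    (hΔt : ∀ m ∈ I ∪ J, 0 ≤ Δt m)
    (hin : ∀ i ∈ I,
      Δt i * (-am i) * Ap i * (ap i - up i) ≤ Δx i * Abar i * (ap i - am i))
    (hout : ∀ j ∈ J,
      Δt j * ap j * Am j * (um j - am j) ≤ Δx j * Abar j * (ap j - am j)) :
    0 ≤ (∑ i ∈ I, Δx i * Abar i) + (∑ j ∈ J, Δx j * Abar j)
        + (∑ i ∈ I, Δt i * H i) - ∑ j ∈ J, Δt j * H j :=
  stmt4_general I J Δx Abar Am Ap um up cm cp ap am H Δt hAm hAp hcm hcp hap ham hpos hH hΔt hin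
    hout
end

section
/- Let x₁ < x₂, let B : [x₁, x₂] → ℝ be continuously differentiable, let w ∈ ℝ be a constant with h(x) := w − B(x) ≥ 0 for all x ∈ [x₁, x₂], and let σ : [x₁, x₂] × [0, ∞) → ℝ be continuous with continuous partial derivative ∂σ/∂x. Define the hydrostatic pressure force I₁(x) = ∫₀^{h(x)} (h(x) − y)·σ(x, y) dy, the wall pressure force I₂(x) = ∫₀^{h(x)} (h(x) − y)·(∂σ/∂x)(x, y) dy, and the wetted area A(x) = ∫₀^{h(x)} σ(x, y) dy. Then I₁(x₂) − I₁(x₁) = ∫_{x₁}^{x₂} I₂(x) dx − ∫_{x₁}^{x₂} A(x)·B′(x) dx. -/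
/-!
Write `h = w - B` for the depth. By the Leibniz rule,
`d/dx ∫₀^{h(x)} (h(x) - y) σ(x, y) dy = ∫₀^{h} (h - y) ∂ₓσ dy + h' ∫₀^{h} σ dy`,
where the boundary term `h' · (h - y) σ |_{y = h}` has dropped out because the integrand vanishes
at the free surface. With `h' = -B'` this reads `I₁' = I₂ - A B'`, and the fundamental theorem of
calculus gives the identity. The Leibniz rule is applied to data extended from
`[x₁, x₂] × [0, ∞)` to the whole plane by clamping the arguments, which leaves all integrals
over `[x₁, x₂]` unchanged.
-/

open Set intervalIntegral Filter Topology Asymptotics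

section Leibniz

variable {E : Type*} [NormedAddCommGroup E] [NormedSpace ℝ E]

theorem hasDerivAt_intervalIntegral_of_continuous {f f' : ℝ → ℝ → E} {x₀ : ℝ} (a b : ℝ)
    (hf : Continuous f.uncurry) (hf' : Continuous f'.uncurry)
    (hff' : ∀ᶠ x in 𝓝 x₀, ∀ y, HasDerivAt (f · y) (f' x y) x) :
    HasDerivAt (fun x => ∫ y in a..b, f x y) (∫ y in a..b, f' x₀ y) x₀ := by
  obtain ⟨M, hM⟩ := ((isCompact_closedBall x₀ 1).prod isCompact_uIcc).exists_bound_of_continuousOn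
    (hf'.continuousOn (s := Metric.closedBall x₀ 1 ×ˢ uIcc a b))
  exact (hasDerivAt_integral_of_dominated_loc_of_deriv_le (bound := fun _ => M)
    (inter_mem hff' (Metric.closedBall_mem_nhds x₀ one_pos))
    (.of_forall fun x => (hf.uncurry_left x).aestronglyMeasurable)
    ((hf.uncurry_left x₀).intervalIntegrable a b)
    (hf'.uncurry_left x₀).aestronglyMeasurable
    (.of_forall fun y hy x hx => hM (x, y) ⟨hx.2, uIoc_subset_uIcc hy⟩)
    intervalIntegrable_const
    (.of_forall fun y _ x hx => hx.1 y)).2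

variable [CompleteSpace E]

theorem hasDerivAt_intervalIntegral_variable_upper {f : ℝ → ℝ → E} {h : ℝ → ℝ} {h' x₀ : ℝ}
    (hf : Continuous f.uncurry) (hh : HasDerivAt h h' x₀) :
    HasDerivAt (fun x => ∫ y in h x₀..h x, f x y) (h' • f x₀ (h x₀)) x₀ := by
  set c := h x₀
  have hfrozen : HasDerivAt (fun x => ∫ y in c..h x, f x₀ y) (h' • f x₀ c) x₀ :=
    ((hf.uncurry_left x₀).integral_hasStrictDerivAt c c).hasDerivAt.scomp x₀ hh
  -- `f x → f x₀` uniformly on `[c - 1, c + 1]`, while the interval has length `O(x - x₀)`.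
  have hsmall : (fun x => ∫ y in c..h x, (f x y - f x₀ y)) =o[𝓝 x₀] fun x => h x - c := by
    refine isLittleO_iff.2 fun ε hε => ?_
    obtain ⟨v, hv, hfv⟩ := isCompact_Icc.mem_uniformity_of_prod (k := Icc (c - 1) (c + 1))
      hf.continuousOn (mem_univ x₀) (Metric.dist_mem_uniformity hε)
    have hnear : ∀ᶠ x in 𝓝 x₀, h x ∈ Ioo (c - 1) (c + 1) :=
      hh.continuousAt.eventually (Ioo_mem_nhds (by linarith) (by linarith))
    filter_upwards [nhdsWithin_univ x₀ ▸ hv, hnear] with x hxv hxc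
    rw [Real.norm_eq_abs]
    refine norm_integral_le_of_norm_le_const fun y hy => ?_
    have hy' : y ∈ Icc (c - 1) (c + 1) :=
      uIcc_subset_Icc ⟨by linarith, by linarith⟩ (Ioo_subset_Icc_self hxc) (uIoc_subset_uIcc hy)
    have hclose : dist (f x y) (f x₀ y) < ε := hfv x hxv y hy'
    exact (dist_eq_norm (f x y) (f x₀ y) ▸ hclose).le
  have hvariation : HasDerivAt (fun x => ∫ y in c..h x, (f x y - f x₀ y)) 0 x₀ := by
    have := hsmall.trans_isBigO hh.isBigO_sub
    rw [hasDerivAt_iff_isLittleO]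
    simpa using this
  convert hfrozen.add hvariation using 1
  · ext x
    rw [Pi.add_apply, integral_sub ((hf.uncurry_left x).intervalIntegrable _ _)
      ((hf.uncurry_left x₀).intervalIntegrable _ _)]
    abel
  · rw [add_zero]

theorem hasDerivAt_intervalIntegral_leibniz {f f' : ℝ → ℝ → E} {h : ℝ → ℝ} {h' x₀ : ℝ}
    (a : ℝ) (hf : Continuous f.uncurry) (hf' : Continuous f'.uncurry)
    (hff' : ∀ᶠ x in 𝓝 x₀, ∀ y, HasDerivAt (f · y) (f' x y) x) (hh : HasDerivAt h h' x₀) :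
    HasDerivAt (fun x => ∫ y in a..h x, f x y) ((∫ y in a..h x₀, f' x₀ y) + h' • f x₀ (h x₀))
      x₀ := by
  convert (hasDerivAt_intervalIntegral_of_continuous a (h x₀) hf hf' hff').add
    (hasDerivAt_intervalIntegral_variable_upper hf hh) using 1
  ext x
  exact (integral_add_adjacent_intervals ((hf.uncurry_left x).intervalIntegrable _ _)
    ((hf.uncurry_left x).intervalIntegrable _ _)).symm

end Leibniz

noncomputable def hydrostaticForce (d : ℝ → ℝ) (s : ℝ → ℝ → ℝ) (x : ℝ) : ℝ :=
  ∫ y in (0 : ℝ)..d x, (d x - y) * s x y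

noncomputable def wettedArea (d : ℝ → ℝ) (s : ℝ → ℝ → ℝ) (x : ℝ) : ℝ :=
  ∫ y in (0 : ℝ)..d x, s x y

section Hydrostatic

variable {d d' : ℝ → ℝ} {s s' : ℝ → ℝ → ℝ}

theorem continuous_hydrostaticForce (hd : Continuous d) (hs : Continuous s.uncurry) :
    Continuous (hydrostaticForce d s) :=
  continuous_parametric_intervalIntegral_of_continuous
    (((hd.comp continuous_fst).sub continuous_snd).mul hs) hd

theorem continuous_wettedArea (hd : Continuous d) (hs : Continuous s.uncurry) :
    Continuous (wettedArea d s) :=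
  continuous_parametric_intervalIntegral_of_continuous hs hd

theorem hydrostaticForce_congr {e : ℝ → ℝ} {t : ℝ → ℝ → ℝ} {x : ℝ} (hde : d x = e x)
    (hd : 0 ≤ d x) (hst : ∀ y ∈ Icc 0 (d x), s x y = t x y) :
    hydrostaticForce d s x = hydrostaticForce e t x := by
  rw [hydrostaticForce, hydrostaticForce, ← hde]
  exact integral_congr fun y hy => by rw [hst y (uIcc_of_le hd ▸ hy)]

theorem wettedArea_congr {e : ℝ → ℝ} {t : ℝ → ℝ → ℝ} {x : ℝ} (hde : d x = e x)
    (hd : 0 ≤ d x) (hst : ∀ y ∈ Icc 0 (d x), s x y = t x y) :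
    wettedArea d s x = wettedArea e t x := by
  rw [wettedArea, wettedArea, ← hde]
  exact integral_congr fun y hy => hst y (uIcc_of_le hd ▸ hy)

theorem hasDerivAt_hydrostaticForce {x₀ : ℝ} (hd : Continuous d) (hd' : Continuous d')
    (hdd' : ∀ᶠ x in 𝓝 x₀, HasDerivAt d (d' x) x) (hs : Continuous s.uncurry)
    (hs' : Continuous s'.uncurry) (hss' : ∀ᶠ x in 𝓝 x₀, ∀ y, HasDerivAt (s · y) (s' x y) x) :
    HasDerivAt (hydrostaticForce d s)
      (hydrostaticForce d s' x₀ + d' x₀ * wettedArea d s x₀) x₀ := by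
  have hF : Continuous (Function.uncurry fun x y => (d x - y) * s x y) :=
    ((hd.comp continuous_fst).sub continuous_snd).mul hs
  have hF' : Continuous
      (Function.uncurry fun x y => d' x * s x y + (d x - y) * s' x y) :=
    ((hd'.comp continuous_fst).mul hs).add (((hd.comp continuous_fst).sub continuous_snd).mul hs')
  have hFF' : ∀ᶠ x in 𝓝 x₀, ∀ y, HasDerivAt (fun x => (d x - y) * s x y)
      (d' x * s x y + (d x - y) * s' x y) x := by
    filter_upwards [hdd', hss'] with x hdx hsx y
    exact (hdx.sub_const y).mul (hsx y)
  refine (hasDerivAt_intervalIntegral_leibniz 0 hF hF' hFF' hdd'.self_of_nhds).congr_deriv ?_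
  have hs₀ := hs.uncurry_left x₀
  have hs'₀ := hs'.uncurry_left x₀
  rw [integral_add (f := fun y => d' x₀ * s x₀ y) (g := fun y => (d x₀ - y) * s' x₀ y)
    (Continuous.intervalIntegrable (by fun_prop) _ _)
    (Continuous.intervalIntegrable (by fun_prop) _ _), integral_const_mul, sub_self, zero_mul,
    smul_zero, add_zero, add_comm]
  rfl

theorem hydrostaticForce_sub_eq_integral {a b w : ℝ} (hab : a ≤ b) {B B' : ℝ → ℝ}
    (hB : Continuous B) (hB' : Continuous B') (hBB' : ∀ x ∈ Ioo a b, HasDerivAt B (B' x) x)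
    (hs : Continuous s.uncurry) (hs' : Continuous s'.uncurry)
    (hss' : ∀ x ∈ Ioo a b, ∀ y, HasDerivAt (s · y) (s' x y) x) :
    hydrostaticForce (fun x => w - B x) s b - hydrostaticForce (fun x => w - B x) s a =
      (∫ x in a..b, hydrostaticForce (fun x => w - B x) s' x) -
        ∫ x in a..b, wettedArea (fun x => w - B x) s x * B' x := by
  have hd : Continuous fun x => w - B x := continuous_const.sub hB
  have hI : Continuous (hydrostaticForce (fun x => w - B x) s') :=
    continuous_hydrostaticForce hd hs'
  have hAB : Continuous fun x => wettedArea (fun x => w - B x) s x * B' x :=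
    (continuous_wettedArea hd hs).mul hB'
  have hderiv : ∀ x ∈ Ioo a b, HasDerivAt (hydrostaticForce (fun x => w - B x) s)
      (hydrostaticForce (fun x => w - B x) s' x - wettedArea (fun x => w - B x) s x * B' x) x := by
    intro x hx
    have hnhds : Ioo a b ∈ 𝓝 x := Ioo_mem_nhds hx.1 hx.2
    convert hasDerivAt_hydrostaticForce (d' := fun x => -B' x) hd hB'.neg
      (mem_of_superset hnhds fun z hz => (hBB' z hz).const_sub w) hs hs'
      (mem_of_superset hnhds hss') using 1
    ring
  rw [← integral_sub (hI.intervalIntegrable _ _) (hAB.intervalIntegrable _ _),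
    integral_eq_sub_of_hasDerivAt_of_le hab (continuous_hydrostaticForce hd hs).continuousOn
      hderiv ((hI.sub hAB).intervalIntegrable _ _)]

end Hydrostatic

section Extension

variable {a b : ℝ} (hab : a ≤ b) {β E : Type*} [NormedAddCommGroup E] [NormedSpace ℝ E]

noncomputable def IccIciExtend (f : ℝ → ℝ → β) (x y : ℝ) : β :=
  f (projIcc a b hab x) (max y 0)

theorem continuous_IccIciExtend [TopologicalSpace β] {f : ℝ → ℝ → β}
    (hf : ContinuousOn f.uncurry (Icc a b ×ˢ Ici 0)) : Continuous (IccIciExtend hab f).uncurry :=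
  hf.comp_continuous
    (((continuous_subtype_val.comp (continuous_projIcc (h := hab))).comp continuous_fst).prodMk
      (continuous_snd.max continuous_const))
    fun p => ⟨(projIcc a b hab p.1).2, mem_Ici.2 (le_max_right _ _)⟩

theorem IccIciExtend_of_mem {f : ℝ → ℝ → β} {x y : ℝ} (hx : x ∈ Icc a b) (hy : 0 ≤ y) :
    IccIciExtend hab f x y = f x y := by
  rw [IccIciExtend, projIcc_of_mem hab hx, max_eq_left hy]

theorem hasDerivAt_IccIciExtend {f f' : ℝ → ℝ → E}
    (hff' : ∀ y ∈ Ici (0 : ℝ), ∀ x ∈ Icc a b, HasDerivAt (f · y) (f' x y) x) {x : ℝ}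
    (hx : x ∈ Ioo a b) (y : ℝ) :
    HasDerivAt (IccIciExtend hab f · y) (IccIciExtend hab f' x y) x := by
  rw [IccIciExtend, projIcc_of_mem hab (Ioo_subset_Icc_self hx)]
  refine (hff' _ (le_max_right y 0) x (Ioo_subset_Icc_self hx)).congr_of_eventuallyEq ?_
  filter_upwards [Ioo_mem_nhds hx.1 hx.2] with t ht
  rw [IccIciExtend, projIcc_of_mem hab (Ioo_subset_Icc_self ht)]

theorem continuous_IccExtend_domRestrict [TopologicalSpace β] {g : ℝ → β} (hg : ContinuousOn g (Icc a b)) :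
    Continuous (IccExtend hab ((Icc a b).domRestrict g)) :=
  continuous_IccExtend_iff.2 (continuousOn_iff_continuous_domRestrict.1 hg)

theorem hasDerivAt_IccExtend_domRestrict {g g' : ℝ → E}
    (hgg' : ∀ x ∈ Icc a b, HasDerivAt g (g' x) x) {x : ℝ} (hx : x ∈ Ioo a b) :
    HasDerivAt (IccExtend hab ((Icc a b).domRestrict g))
      (IccExtend hab ((Icc a b).domRestrict g') x) x := by
  rw [IccExtend_of_mem hab _ (Ioo_subset_Icc_self hx)]
  refine (hgg' x (Ioo_subset_Icc_self hx)).congr_of_eventuallyEq ?_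
  filter_upwards [Ioo_mem_nhds hx.1 hx.2] with t ht
  exact IccExtend_of_mem hab _ (Ioo_subset_Icc_self ht)

variable {w : ℝ} {B : ℝ → ℝ} {x : ℝ}

theorem hydrostaticForce_extend (s : ℝ → ℝ → ℝ) (hx : x ∈ Icc a b) (hd : 0 ≤ w - B x) :
    hydrostaticForce (fun x => w - IccExtend hab ((Icc a b).domRestrict B) x)
      (IccIciExtend hab s) x = hydrostaticForce (fun x => w - B x) s x :=
  hydrostaticForce_congr (by rw [IccExtend_of_mem hab _ hx, domRestrict_apply])
    (by rwa [IccExtend_of_mem hab _ hx, domRestrict_apply])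
    fun _ hy => IccIciExtend_of_mem hab hx hy.1

theorem wettedArea_extend (s : ℝ → ℝ → ℝ) (hx : x ∈ Icc a b) (hd : 0 ≤ w - B x) :
    wettedArea (fun x => w - IccExtend hab ((Icc a b).domRestrict B) x)
      (IccIciExtend hab s) x = wettedArea (fun x => w - B x) s x :=
  wettedArea_congr (by rw [IccExtend_of_mem hab _ hx, domRestrict_apply])
    (by rwa [IccExtend_of_mem hab _ hx, domRestrict_apply])
    fun _ hy => IccIciExtend_of_mem hab hx hy.1

end Extension

/-- Lake-at-rest source-flux balance: for a horizontal water surface `w` with depth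
`h(x) = w - B(x) ≥ 0`, hydrostatic force `I₁(x) = ∫₀^{h(x)} (h(x)-y) σ(x,y) dy`, wall
pressure force `I₂(x) = ∫₀^{h(x)} (h(x)-y) ∂σ/∂x(x,y) dy` and wetted area
`A(x) = ∫₀^{h(x)} σ(x,y) dy`, one has
`I₁(x₂) - I₁(x₁) = ∫_{x₁}^{x₂} I₂ dx - ∫_{x₁}^{x₂} A B' dx`. -/
theorem stmt6 (x₁ x₂ : ℝ) (hx : x₁ < x₂) (w : ℝ)
    (B B' : ℝ → ℝ)
    (hB : ∀ x ∈ Set.Icc x₁ x₂, HasDerivAt B (B' x) x)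
    (hB' : ContinuousOn B' (Set.Icc x₁ x₂))
    (hh : ∀ x ∈ Set.Icc x₁ x₂, 0 ≤ w - B x)
    (σ σx : ℝ → ℝ → ℝ)
    (hσ : ContinuousOn (fun p : ℝ × ℝ => σ p.1 p.2) (Set.Icc x₁ x₂ ×ˢ Set.Ici 0))
    (hσx : ∀ y ∈ Set.Ici (0 : ℝ), ∀ x ∈ Set.Icc x₁ x₂,
      HasDerivAt (fun t => σ t y) (σx x y) x)
    (hσxc : ContinuousOn (fun p : ℝ × ℝ => σx p.1 p.2) (Set.Icc x₁ x₂ ×ˢ Set.Ici 0))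
    (I₁ I₂ A : ℝ → ℝ)
    (hI₁ : ∀ x, I₁ x = ∫ y in (0 : ℝ)..(w - B x), (w - B x - y) * σ x y)
    (hI₂ : ∀ x, I₂ x = ∫ y in (0 : ℝ)..(w - B x), (w - B x - y) * σx x y)
    (hA : ∀ x, A x = ∫ y in (0 : ℝ)..(w - B x), σ x y) :
    I₁ x₂ - I₁ x₁ = (∫ x in x₁..x₂, I₂ x) - ∫ x in x₁..x₂, A x * B' x := by
  obtain rfl : I₁ = hydrostaticForce (fun x => w - B x) σ := funext hI₁
  obtain rfl : I₂ = hydrostaticForce (fun x => w - B x) σx := funext hI₂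
  obtain rfl : A = wettedArea (fun x => w - B x) σ := funext hA
  have hle := hx.le
  have balance := hydrostaticForce_sub_eq_integral hle (w := w)
    (continuous_IccExtend_domRestrict hle fun x hxI => (hB x hxI).continuousAt.continuousWithinAt)
    (continuous_IccExtend_domRestrict hle hB')
    (fun _ hxI => hasDerivAt_IccExtend_domRestrict hle hB hxI)
    (continuous_IccIciExtend hle hσ) (continuous_IccIciExtend hle hσxc)
    (fun _ hxI => hasDerivAt_IccIciExtend hle hσx hxI)
  have hx₁ := left_mem_Icc.2 hle
  have hx₂ := right_mem_Icc.2 hle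
  rw [← hydrostaticForce_extend hle σ hx₂ (hh x₂ hx₂),
    ← hydrostaticForce_extend hle σ hx₁ (hh x₁ hx₁), balance]
  congr 1 <;> refine integral_congr fun x hxI => ?_ <;> rw [uIcc_of_le hle] at hxI
  · exact hydrostaticForce_extend hle σx hxI (hh x hxI)
  · rw [wettedArea_extend hle σ hxI (hh x hxI), IccExtend_of_mem hle _ hxI, domRestrict_apply]
end

section
/- Let x_L < x_R with Δx = x_R − x_L, let h_L, h_R ≥ 0 with Δh = h_R − h_L > 0, and define the linear depth h(x) = h_L + (x − x_L)·Δh/Δx. Let σ_L, σ_R : [0, ∞) → ℝ be continuous, and define the interpolated width σ(x, y) = [σ_R(y)·(x − x_L) + σ_L(y)·(x_R − x)]/Δx. Then for all x₁ ≤ x₂ with x_L ≤ x₁ and x₂ ≤ x_R, setting h₁ = h(x₁) and h₂ = h(x₂), the water volume satisfies ∫_{x₁}^{x₂} ∫₀^{h(x)} σ(x, y) dy dx = [(x₂ − x₁)(2x_R − x₁ − x₂)/(2Δx)]·∫₀^{h₁} σ_L(y) dy − [(x_R − x₂)²/(2Δx)]·∫_{h₁}^{h₂} σ_L(y) dy +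 [Δx/(2Δh²)]·∫_{h₁}^{h₂} σ_L(y)·(h_R − y)² dy + [(x₂ − x₁)(x₁ + x₂ − 2x_L)/(2Δx)]·∫₀^{h₁} σ_R(y) dy + [(x₂ − x_L)²/(2Δx)]·∫_{h₁}^{h₂} σ_R(y) dy − [Δx/(2Δh²)]·∫_{h₁}^{h₂} σ_R(y)·(y − h_L)² dy. -/
/-!
Integrating first in `y`, the inner integral at station `x` is a combination of the primitives
`S_L(u) = ∫₀ᵘ σ_L` and `S_R(u) = ∫₀ᵘ σ_R` at the depth `u = h(x)`, with weights affine in `u`.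
Substituting `u = h(x)` turns the volume into
`Δx / Δh² · ∫_{h₁}^{h₂} (S_R(u) (u - h_L) - S_L(u) (u - h_R)) du`, and one integration by parts
per primitive produces the moments `∫ σ (u - c)²`. The depth is nonnegative on `[x₁, x₂]`, so only
the values of `σ_L`, `σ_R` on `[0, ∞)` enter.
-/

open intervalIntegral Set
open MeasureTheory (volume)
open scoped Interval

section PrimitiveOnIci

variable {f : ℝ → ℝ} {a b : ℝ}

theorem ContinuousOn.intervalIntegrable_of_Ici (hf : ContinuousOn f (Ici 0)) (ha : 0 ≤ a)
    (hb : 0 ≤ b) : IntervalIntegrable f volume a b :=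
  (hf.mono (ordConnected_Ici.uIcc_subset ha hb)).intervalIntegrable

theorem hasDerivWithinAt_primitive_of_continuousOn_Ici (hf : ContinuousOn f (Ici 0)) {u : ℝ}
    (hu : 0 ≤ u) : HasDerivWithinAt (fun v => ∫ t in (0 : ℝ)..v, f t) (f u) (Ici 0) u := by
  have hg : Continuous fun y => f (max y 0) :=
    hf.comp_continuous (continuous_id.max continuous_const) fun y => le_max_right y 0
  have hfg : EqOn (fun v => ∫ t in (0 : ℝ)..v, f t) (fun v => ∫ t in (0 : ℝ)..v, f (max t 0))
      (Ici 0) := fun v hv =>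
    integral_congr fun t ht => by
      rw [max_eq_left (ordConnected_Ici.uIcc_subset self_mem_Ici hv ht)]
  simpa only [max_eq_left hu] using
    (hg.integral_hasStrictDerivAt 0 u).hasDerivAt.hasDerivWithinAt.congr hfg (hfg hu)

theorem continuousOn_primitive_of_continuousOn_Ici (hf : ContinuousOn f (Ici 0)) :
    ContinuousOn (fun v => ∫ t in (0 : ℝ)..v, f t) (Ici 0) := fun _ hu =>
  (hasDerivWithinAt_primitive_of_continuousOn_Ici hf hu).continuousWithinAt

theorem intervalIntegrable_primitive_mul_sub (hf : ContinuousOn f (Ici 0)) (ha : 0 ≤ a)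
    (hb : 0 ≤ b) (c : ℝ) :
    IntervalIntegrable (fun u => (∫ t in (0 : ℝ)..u, f t) * (u - c)) volume a b :=
  (((continuousOn_primitive_of_continuousOn_Ici hf).mono (ordConnected_Ici.uIcc_subset ha hb)).mul
    (continuousOn_id.sub continuousOn_const)).intervalIntegrable

theorem integral_primitive_mul_sub (hf : ContinuousOn f (Ici 0)) (ha : 0 ≤ a) (hb : 0 ≤ b)
    (c : ℝ) :
    ∫ u in a..b, (∫ t in (0 : ℝ)..u, f t) * (u - c) =
      (∫ t in (0 : ℝ)..b, f t) * ((b - c) ^ 2 / 2) - (∫ t in (0 : ℝ)..a, f t) * ((a - c) ^ 2 / 2)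
        - (∫ u in a..b, f u * (u - c) ^ 2) / 2 := by
  have hab : [[a, b]] ⊆ Ici 0 := ordConnected_Ici.uIcc_subset ha hb
  have hv : ∀ u, HasDerivAt (fun u => (u - c) ^ 2 / 2) (u - c) u := fun u => by
    simpa using (((hasDerivAt_id u).sub_const c).pow 2).div_const 2
  rw [integral_mul_deriv_eq_deriv_mul_of_hasDerivWithinAt
      (fun u hu => (hasDerivWithinAt_primitive_of_continuousOn_Ici hf (hab hu)).mono hab)
      (fun u _ => (hv u).hasDerivWithinAt) (hf.intervalIntegrable_of_Ici ha hb)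
      ((continuous_id.sub continuous_const).intervalIntegrable _ _),
    ← integral_div]
  simp only [mul_div_assoc]

end PrimitiveOnIci

/-- Since `(x - xL) / Δx = (h x - hL) / Δh` and `(xR - x) / Δx = (hR - h x) / Δh`, the inner
integral is a function of the depth `h x` alone, and the affine map `h` is a change of variables. -/
theorem cellVolume_eq_integral_depth {xL xR hL hR : ℝ} (hx : xL ≠ xR) (hΔh : hL ≠ hR)
    {σL σR : ℝ → ℝ} (hσL : ContinuousOn σL (Ici 0)) (hσR : ContinuousOn σR (Ici 0))
    {h : ℝ → ℝ} (hh : ∀ x, h x = hL + (x - xL) * (hR - hL) / (xR - xL))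
    {σ : ℝ → ℝ → ℝ} (hσ : ∀ x y, σ x y = (σR y * (x - xL) + σL y * (xR - x)) / (xR - xL))
    {x₁ x₂ : ℝ} (h_nonneg : ∀ x ∈ [[x₁, x₂]], 0 ≤ h x) :
    ∫ x in x₁..x₂, ∫ y in (0 : ℝ)..h x, σ x y =
      (xR - xL) / (hR - hL) ^ 2 * ∫ u in h x₁..h x₂,
        ((∫ t in (0 : ℝ)..u, σR t) * (u - hL) - (∫ t in (0 : ℝ)..u, σL t) * (u - hR)) := by
  have hΔx : xR - xL ≠ 0 := sub_ne_zero.2 hx.symm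
  have hΔh' : hR - hL ≠ 0 := sub_ne_zero.2 hΔh.symm
  set k := (hR - hL) / (xR - xL) with hk
  set F : ℝ → ℝ := fun u =>
    (∫ t in (0 : ℝ)..u, σR t) * (u - hL) - (∫ t in (0 : ℝ)..u, σL t) * (u - hR)
  have inner : ∀ x ∈ [[x₁, x₂]], ∫ y in (0 : ℝ)..h x, σ x y = F (h x) / (hR - hL) := by
    intro x hx'
    simp only [hσ, F]
    rw [integral_div, integral_add
        ((hσR.intervalIntegrable_of_Ici le_rfl (h_nonneg x hx')).mul_const _)
        ((hσL.intervalIntegrable_of_Ici le_rfl (h_nonneg x hx')).mul_const _),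
      integral_mul_const, integral_mul_const, hh]
    field_simp
    ring
  have h_affine : h = fun x => k * x + (hL - k * xL) := funext fun x => by rw [hh]; ring
  have subst : ∫ x in x₁..x₂, F (h x) = k⁻¹ * ∫ u in h x₁..h x₂, F u := by
    rw [h_affine]
    exact integral_comp_mul_add F (div_ne_zero hΔh' hΔx) _
  rw [integral_congr inner, integral_div, subst, hk]
  field_simp

theorem stmt11_general (xL xR : ℝ) (hx : xL < xR)
    (hL hR : ℝ) (hhL : 0 ≤ hL) (hΔh : hL < hR)
    (σL σR : ℝ → ℝ)
    (hσL : ContinuousOn σL (Set.Ici 0)) (hσR : ContinuousOn σR (Set.Ici 0))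
    (h : ℝ → ℝ) (hh : ∀ x, h x = hL + (x - xL) * (hR - hL) / (xR - xL))
    (σ : ℝ → ℝ → ℝ)
    (hσ : ∀ x y, σ x y = (σR y * (x - xL) + σL y * (xR - x)) / (xR - xL))
    (x₁ x₂ : ℝ) (h12 : x₁ ≤ x₂) (hx1 : xL ≤ x₁) :
    (∫ x in x₁..x₂, ∫ y in (0 : ℝ)..(h x), σ x y) =
      (x₂ - x₁) * (2 * xR - x₁ - x₂) / (2 * (xR - xL)) * (∫ y in (0 : ℝ)..(h x₁), σL y)
      - (xR - x₂) ^ 2 / (2 * (xR - xL)) * (∫ y in (h x₁)..(h x₂), σL y)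
      + (xR - xL) / (2 * (hR - hL) ^ 2) * (∫ y in (h x₁)..(h x₂), σL y * (hR - y) ^ 2)
      + (x₂ - x₁) * (x₁ + x₂ - 2 * xL) / (2 * (xR - xL)) * (∫ y in (0 : ℝ)..(h x₁), σR y)
      + (x₂ - xL) ^ 2 / (2 * (xR - xL)) * (∫ y in (h x₁)..(h x₂), σR y)
      - (xR - xL) / (2 * (hR - hL) ^ 2) * (∫ y in (h x₁)..(h x₂), σR y * (y - hL) ^ 2) := by
  set k := (hR - hL) / (xR - xL) with hk
  have hk0 : 0 < k := div_pos (sub_pos.2 hΔh) (sub_pos.2 hx)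
  have h_sub_hL : ∀ x, h x - hL = k * (x - xL) := fun x => by rw [hh]; ring
  have h_sub_hR : ∀ x, h x - hR = k * (x - xR) := fun x => by
    rw [hh, hk]; field_simp [sub_ne_zero.2 hx.ne']; ring
  have h_nonneg : ∀ x ∈ [[x₁, x₂]], 0 ≤ h x := fun x hx' => by
    have : xL ≤ x := hx1.trans (uIcc_of_le h12 ▸ hx').1
    nlinarith [h_sub_hL x]
  have h₁ := h_nonneg x₁ left_mem_uIcc
  have h₂ := h_nonneg x₂ right_mem_uIcc
  rw [cellVolume_eq_integral_depth hx.ne hΔh.ne hσL hσR hh hσ h_nonneg,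
    integral_sub (intervalIntegrable_primitive_mul_sub hσR h₁ h₂ hL)
      (intervalIntegrable_primitive_mul_sub hσL h₁ h₂ hR),
    integral_primitive_mul_sub hσR h₁ h₂, integral_primitive_mul_sub hσL h₁ h₂,
    ← integral_add_adjacent_intervals (hσL.intervalIntegrable_of_Ici le_rfl h₁)
      (hσL.intervalIntegrable_of_Ici h₁ h₂),
    ← integral_add_adjacent_intervals (hσR.intervalIntegrable_of_Ici le_rfl h₁)
      (hσR.intervalIntegrable_of_Ici h₁ h₂),
    h_sub_hL, h_sub_hL, h_sub_hR, h_sub_hR, hk]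
  simp only [sub_sq_comm hR]
  field_simp [sub_ne_zero.2 hx.ne', sub_ne_zero.2 hΔh.ne', sub_ne_zero.2 hΔh.ne]
  ring

/-- Equation (13): closed form of the water volume `∫_{x₁}^{x₂} ∫₀^{h(x)} σ(x,y) dy dx` on a
cell `[x_L, x_R]` with linear depth `h` and linearly interpolated width `σ`. -/
theorem stmt11 (xL xR : ℝ) (hx : xL < xR)
    (hL hR : ℝ) (hhL : 0 ≤ hL) (hhR : 0 ≤ hR) (hΔh : hL < hR)
    (σL σR : ℝ → ℝ)
    (hσL : ContinuousOn σL (Set.Ici 0)) (hσR : ContinuousOn σR (Set.Ici 0))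
    (h : ℝ → ℝ) (hh : ∀ x, h x = hL + (x - xL) * (hR - hL) / (xR - xL))
    (σ : ℝ → ℝ → ℝ)
    (hσ : ∀ x y, σ x y = (σR y * (x - xL) + σL y * (xR - x)) / (xR - xL))
    (x₁ x₂ : ℝ) (h12 : x₁ ≤ x₂) (hx1 : xL ≤ x₁) (hx2 : x₂ ≤ xR) :
    (∫ x in x₁..x₂, ∫ y in (0 : ℝ)..(h x), σ x y) =
      (x₂ - x₁) * (2 * xR - x₁ - x₂) / (2 * (xR - xL)) * (∫ y in (0 : ℝ)..(h x₁), σL y)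
      - (xR - x₂) ^ 2 / (2 * (xR - xL)) * (∫ y in (h x₁)..(h x₂), σL y)
      + (xR - xL) / (2 * (hR - hL) ^ 2) * (∫ y in (h x₁)..(h x₂), σL y * (hR - y) ^ 2)
      + (x₂ - x₁) * (x₁ + x₂ - 2 * xL) / (2 * (xR - xL)) * (∫ y in (0 : ℝ)..(h x₁), σR y)
      + (x₂ - xL) ^ 2 / (2 * (xR - xL)) * (∫ y in (h x₁)..(h x₂), σR y)
      - (xR - xL) / (2 * (hR - hL) ^ 2) * (∫ y in (h x₁)..(h x₂), σR y * (y - hL) ^ 2) :=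
  stmt11_general xL xR hx hL hR hhL hΔh σL σR hσL hσR h hh σ hσ x₁ x₂ h12 hx1
end

section
/- Let x_L < x_R with Δx = x_R − x_L, let h_L, h_R ≥ 0 with Δh = h_R − h_L > 0, and define the linear depth h(x) = h_L + (x − x_L)·Δh/Δx. Let σ_L, σ_R : [0, ∞) → ℝ be continuous, and define the interpolated width σ(x, y) = [σ_R(y)·(x − x_L) + σ_L(y)·(x_R − x)]/Δx, so that (∂σ/∂x)(x, y) = (σ_R(y) − σ_L(y))/Δx. Then for all x₁ ≤ x₂ with x_L ≤ x₁ and x₂ ≤ x_R, setting h₁ = h(x₁) and h₂ = h(x₂), the integrated wall pressure force satisfies ∫_{x₁}^{x₂} ∫₀^{h(x)} (h(x) − y)·(∂σ/∂x)(x, y) dy dx = [(x₂ − x₁)/Δx]·∫₀^{h₁} (σ_R(y) − σ_L(y))·((h₁ + h₂)/2 − y) dy + [1/(2Δh)]·∫_{h₁}^{h₂} (σ_R(y) − σ_L(y))·(h₂ − y)² dy. -/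
/-!
Write `g = σ_R - σ_L` and `G(s) = ∫₀^s g(y) (s - y) dy`. The left side is `(1/Δx) ∫ G(h(x)) dx`,
and since `h` is affine with slope `Δh/Δx` this is `(1/Δh) ∫_{h₁}^{h₂} G`. Now `G` is the
derivative of `½ ∫₀^s g(y) (s - y)² dy`, and splitting `[0, h₂]` at `h₁` with
`(h₂ - y)² - (h₁ - y)² = 2 (h₂ - h₁) ((h₁ + h₂)/2 - y)` produces the two terms of the right side.
-/

open intervalIntegral Set

theorem ContinuousOn.continuous_comp_max {β : Type*} [TopologicalSpace β] {f : ℝ → β} {a : ℝ}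
    (hf : ContinuousOn f (Ici a)) : Continuous fun y => f (max y a) :=
  hf.comp_continuous (continuous_id.max continuous_const) fun y => le_max_right y a

theorem intervalIntegral.integral_congr_of_eqOn_Ici {E : Type*} [NormedAddCommGroup E]
    [NormedSpace ℝ E] {f f' : ℝ → E} {a b c : ℝ} (hb : a ≤ b) (hc : a ≤ c)
    (h : EqOn f f' (Ici a)) : ∫ y in b..c, f y = ∫ y in b..c, f' y :=
  integral_congr fun _ hy => h (le_trans (le_min hb hc) hy.1)

section Kernels

variable {g : ℝ → ℝ}

theorem integral_mul_sub_eq (hg : Continuous g) (a s : ℝ) :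
    ∫ y in a..s, g y * (s - y) = s * (∫ y in a..s, g y) - ∫ y in a..s, y * g y := by
  have hexp : ∀ y, g y * (s - y) = s * g y - y * g y := fun y => by ring
  simp_rw [hexp]
  rw [integral_sub, integral_const_mul] <;>
    exact Continuous.intervalIntegrable (by fun_prop) _ _

theorem integral_mul_sub_sq_eq (hg : Continuous g) (a s : ℝ) :
    ∫ y in a..s, g y * (s - y) ^ 2 =
      s ^ 2 * (∫ y in a..s, g y) - 2 * s * (∫ y in a..s, y * g y) + ∫ y in a..s, y ^ 2 * g y := by
  have hexp : ∀ y, g y * (s - y) ^ 2 = s ^ 2 * g y - 2 * s * (y * g y) + y ^ 2 * g y :=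
    fun y => by ring
  simp_rw [hexp]
  rw [integral_add, integral_sub, integral_const_mul, integral_const_mul] <;>
    exact Continuous.intervalIntegrable (by fun_prop) _ _

theorem continuous_integral_mul_sub (hg : Continuous g) (a : ℝ) :
    Continuous fun s => ∫ y in a..s, g y * (s - y) := by
  simp_rw [integral_mul_sub_eq hg a]
  have hM0 := continuous_primitive (μ := MeasureTheory.volume) hg.intervalIntegrable a
  have hM1 := continuous_primitive (μ := MeasureTheory.volume)
    (continuous_id.mul hg).intervalIntegrable a
  fun_prop

theorem hasDerivAt_integral_mul_sub_sq (hg : Continuous g) (a s : ℝ) :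
    HasDerivAt (fun s => ∫ y in a..s, g y * (s - y) ^ 2) (2 * ∫ y in a..s, g y * (s - y)) s := by
  have hM0 := (hg.integral_hasStrictDerivAt a s).hasDerivAt
  have hM1 :=
    ((show Continuous fun y => y * g y by fun_prop).integral_hasStrictDerivAt a s).hasDerivAt
  have hM2 :=
    ((show Continuous fun y => y ^ 2 * g y by fun_prop).integral_hasStrictDerivAt a s).hasDerivAt
  have := (((hasDerivAt_pow 2 s).fun_mul hM0).fun_sub
    (((hasDerivAt_id' s).const_mul 2).fun_mul hM1)).fun_add hM2
  simp_rw [integral_mul_sub_sq_eq hg a, integral_mul_sub_eq hg]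
  exact this.congr_deriv (by ring)

theorem integral_mul_sub_sq_sub_integral_mul_sub_sq (hg : Continuous g) (a b c : ℝ) :
    (∫ y in a..c, g y * (c - y) ^ 2) - ∫ y in a..b, g y * (b - y) ^ 2 =
      2 * (c - b) * (∫ y in a..b, g y * ((b + c) / 2 - y)) + ∫ y in b..c, g y * (c - y) ^ 2 := by
  have hint : ∀ (p : ℝ → ℝ) (u v : ℝ), Continuous p → IntervalIntegrable (fun y => g y * p y)
      MeasureTheory.volume u v := fun p u v hp => (hg.mul hp).intervalIntegrable u v
  rw [← integral_add_adjacent_intervals (b := b) (hint _ a b (by fun_prop))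
    (hint _ b c (by fun_prop)), add_sub_right_comm,
    ← integral_sub (hint _ a b (by fun_prop)) (hint _ a b (by fun_prop)), ← integral_const_mul]
  congr 1
  exact integral_congr fun y _ => by ring

theorem integral_integral_mul_sub (hg : Continuous g) (a b c : ℝ) :
    ∫ s in b..c, ∫ y in a..s, g y * (s - y) =
      (c - b) * (∫ y in a..b, g y * ((b + c) / 2 - y)) + 1 / 2 * ∫ y in b..c, g y * (c - y) ^ 2 := by
  rw [integral_eq_sub_of_hasDerivAt (f := fun s => 1 / 2 * ∫ y in a..s, g y * (s - y) ^ 2)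
    (fun s _ => ((hasDerivAt_integral_mul_sub_sq hg a s).const_mul _).congr_deriv (by ring))
    ((continuous_integral_mul_sub hg a).intervalIntegrable _ _)]
  linarith [integral_mul_sub_sq_sub_integral_mul_sub_sq hg a b c]

theorem integral_integral_mul_sub_of_continuousOn {a b c : ℝ} (hg : ContinuousOn g (Ici a))
    (hb : a ≤ b) (hc : a ≤ c) :
    ∫ s in b..c, ∫ y in a..s, g y * (s - y) =
      (c - b) * (∫ y in a..b, g y * ((b + c) / 2 - y)) + 1 / 2 * ∫ y in b..c, g y * (c - y) ^ 2 := by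
  have hext : ∀ {p : ℝ → ℝ} {u v : ℝ}, a ≤ u → a ≤ v →
      ∫ y in u..v, g (max y a) * p y = ∫ y in u..v, g y * p y := fun hu hv =>
    integral_congr_of_eqOn_Ici hu hv fun y hy => by rw [max_eq_left hy]
  have key := integral_integral_mul_sub hg.continuous_comp_max a b c
  rwa [integral_congr_of_eqOn_Ici hb hc fun s hs => hext le_rfl hs, hext le_rfl hb, hext hb hc]
    at key

end Kernels

theorem stmt12_general (xL xR : ℝ) (hx : xL < xR)
    (hL hR : ℝ) (hhL : 0 ≤ hL) (hΔh : hL < hR)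
    (σL σR : ℝ → ℝ)
    (hσL : ContinuousOn σL (Set.Ici 0)) (hσR : ContinuousOn σR (Set.Ici 0))
    (h : ℝ → ℝ) (hh : ∀ x, h x = hL + (x - xL) * (hR - hL) / (xR - xL))
    (x₁ x₂ : ℝ) (h12 : x₁ ≤ x₂) (hx1 : xL ≤ x₁) :
    (∫ x in x₁..x₂, ∫ y in (0 : ℝ)..(h x), (h x - y) * ((σR y - σL y) / (xR - xL))) =
      (x₂ - x₁) / (xR - xL) *
        (∫ y in (0 : ℝ)..(h x₁), (σR y - σL y) * ((h x₁ + h x₂) / 2 - y))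
      + 1 / (2 * (hR - hL)) * (∫ y in (h x₁)..(h x₂), (σR y - σL y) * (h x₂ - y) ^ 2) := by
  set m := (hR - hL) / (xR - xL) with hm
  have hm0 : 0 < m := div_pos (sub_pos.2 hΔh) (sub_pos.2 hx)
  have hlin : h = fun x => m * x + (hL - m * xL) := funext fun x => by rw [hh, hm]; ring
  have hnonneg : ∀ x, xL ≤ x → 0 ≤ h x := fun x hxL => by rw [hlin]; nlinarith
  set F := fun s => ∫ y in (0 : ℝ)..s, (σR y - σL y) * (s - y) with hF
  have hinner : (∫ x in x₁..x₂, ∫ y in (0 : ℝ)..(h x), (h x - y) * ((σR y - σL y) / (xR - xL)))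
      = (xR - xL)⁻¹ * ∫ x in x₁..x₂, F (h x) := by
    rw [← integral_const_mul]
    refine integral_congr fun x _ => ?_
    rw [← integral_const_mul]
    exact integral_congr fun y _ => by ring
  have hsubst : ∫ x in x₁..x₂, F (h x) = m⁻¹ * ∫ s in (h x₁)..(h x₂), F s := by
    simp only [hlin]
    exact integral_comp_mul_add F hm0.ne' _
  have hrise : h x₂ - h x₁ = m * (x₂ - x₁) := by rw [hlin]; ring
  have hΔ : hR - hL = m * (xR - xL) := by rw [hm]; field_simp [(sub_pos.2 hx).ne']
  rw [hinner, hsubst, hF, integral_integral_mul_sub_of_continuousOn (g := fun y => σR y - σL y)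
    (hσR.sub hσL) (hnonneg x₁ hx1) (hnonneg x₂ (hx1.trans h12)), hrise, hΔ]
  field_simp

/-- Equation (15): closed form of the integrated wall pressure force
`∫_{x₁}^{x₂} ∫₀^{h(x)} (h(x)-y) ∂σ/∂x(x,y) dy dx` on a cell `[x_L, x_R]` with linear depth
`h` and linearly interpolated width, for which `∂σ/∂x = (σ_R - σ_L)/Δx`. -/
theorem stmt12 (xL xR : ℝ) (hx : xL < xR)
    (hL hR : ℝ) (hhL : 0 ≤ hL) (hhR : 0 ≤ hR) (hΔh : hL < hR)
    (σL σR : ℝ → ℝ)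
    (hσL : ContinuousOn σL (Set.Ici 0)) (hσR : ContinuousOn σR (Set.Ici 0))
    (h : ℝ → ℝ) (hh : ∀ x, h x = hL + (x - xL) * (hR - hL) / (xR - xL))
    (x₁ x₂ : ℝ) (h12 : x₁ ≤ x₂) (hx1 : xL ≤ x₁) (hx2 : x₂ ≤ xR) :
    (∫ x in x₁..x₂, ∫ y in (0 : ℝ)..(h x), (h x - y) * ((σR y - σL y) / (xR - xL))) =
      (x₂ - x₁) / (xR - xL) *
        (∫ y in (0 : ℝ)..(h x₁), (σR y - σL y) * ((h x₁ + h x₂) / 2 - y))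
      + 1 / (2 * (hR - hL)) * (∫ y in (h x₁)..(h x₂), (σR y - σL y) * (h x₂ - y) ^ 2) :=
  stmt12_general xL xR hx hL hR hhL hΔh σL σR hσL hσR h hh x₁ x₂ h12 hx1
end
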